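/- arXiv:2009.07920 — 4 statements merged into one kernel-verified Lean document; each statement's English description precedes it below -/
import Mathlib

section
/- For every real number s with 0 < s < 1/2, one has (π²s² + 1)·sin(2πs) − 2πs·cos(2πs) > 0. -/
open Real

theorem stmt_0 (s : ℝ) (h0 : 0 < s) (h1 : s < 1/2) :
    (π^2 * s^2 + 1) * Real.sin (2*π*s) - 2*π*s * Real.cos (2*π*s) > 0 := by
  set x := 2*π*s with hxdef
  have hpi := Real.pi_pos
  have hx0 : 0 < x := by positivity
  have hxpi : x < π := by rw [hxdef]; nlinarith
  have hsin : 0 < Real.sin x := Real.sin_pos_of_pos_of_lt_pi hx0 hxpi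
  have key : x * Real.cos x < Real.sin x := by
    rcases le_or_gt (Real.cos x) 0 with hc | hc
    · nlinarith
    · have hx2 : x < π / 2 := by
        by_contra h
        push_neg at h
        have := Real.cos_nonpos_of_pi_div_two_le_of_le h (by linarith)
        linarith
      have := Real.lt_tan hx0 hx2
      rw [Real.tan_eq_sin_div_cos] at this
      calc x * Real.cos x < (Real.sin x / Real.cos x) * Real.cos x := by
            exact mul_lt_mul_of_pos_right this hc
        _ = Real.sin x := by field_simp
  nlinarith [sq_nonneg (π * s), mul_pos hsin (mul_pos (mul_pos hpi hpi) (mul_pos h0 h0))]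
end

section
/- For every real number s with 0 < s < 1/2, one has (1/(2s) + π²s/3)·sin(2πs) < π. -/
open Real

/-! Substituting `x = 2πs ∈ (0, π)` turns the claim into `(6 + x²) sin x < 6x`. The Taylor bound
`sin x ≤ x - x³/6 + x⁵/120` (for `x ≥ 0`) gives
`(6 + x²) sin x ≤ 6x - x⁵ (14 - x²) / 120`, and `x² < π² < 14`. -/

theorem le_of_hasDerivAt_le_of_nonneg {f g f' g' : ℝ → ℝ}
    (hf : ∀ x, HasDerivAt f (f' x) x) (hg : ∀ x, HasDerivAt g (g' x) x) (h₀ : f 0 ≤ g 0)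
    (hderiv : ∀ x, 0 < x → f' x ≤ g' x) {x : ℝ} (hx : 0 ≤ x) : f x ≤ g x := by
  have hmono : MonotoneOn (fun y ↦ g y - f y) (Set.Ici 0) := by
    refine monotoneOn_of_hasDerivWithinAt_nonneg (convex_Ici 0) (f' := fun y ↦ g' y - f' y)
      (fun y _ ↦ ((hg y).sub (hf y)).continuousAt.continuousWithinAt)
      (fun y _ ↦ ((hg y).sub (hf y)).hasDerivWithinAt) fun y hy ↦ ?_
    rw [interior_Ici] at hy
    exact sub_nonneg.2 (hderiv y hy)
  have := hmono (Set.mem_Ici.2 le_rfl) hx hx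
  linarith

theorem Real.cos_le_one_sub_sq_div_two_add_pow_four_div {x : ℝ} (hx : 0 ≤ x) :
    cos x ≤ 1 - x ^ 2 / 2 + x ^ 4 / 24 := by
  have hg (y : ℝ) : HasDerivAt (fun y ↦ 1 - y ^ 2 / 2 + y ^ 4 / 24) (-y + y ^ 3 / 6) y :=
    ((((hasDerivAt_pow 2 y).div_const 2).const_sub 1).add
      ((hasDerivAt_pow 4 y).div_const 24)).congr_deriv (by ring)
  refine le_of_hasDerivAt_le_of_nonneg hasDerivAt_cos hg (by simp) (fun y hy ↦ ?_) hx
  linarith [sin_ge_sub_cube hy.le]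

theorem Real.sin_le_sub_cube_add_pow_five_div {x : ℝ} (hx : 0 ≤ x) :
    sin x ≤ x - x ^ 3 / 6 + x ^ 5 / 120 := by
  have hg (y : ℝ) :
      HasDerivAt (fun y ↦ y - y ^ 3 / 6 + y ^ 5 / 120) (1 - y ^ 2 / 2 + y ^ 4 / 24) y :=
    (((hasDerivAt_id' y).sub ((hasDerivAt_pow 3 y).div_const 6)).add
      ((hasDerivAt_pow 5 y).div_const 120)).congr_deriv (by ring)
  exact le_of_hasDerivAt_le_of_nonneg hasDerivAt_sin hg (by simp)
    (fun y hy ↦ cos_le_one_sub_sq_div_two_add_pow_four_div hy.le) hx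

theorem six_add_sq_mul_sin_lt {x : ℝ} (hx₀ : 0 < x) (hx : x ^ 2 < 14) :
    (6 + x ^ 2) * sin x < 6 * x := by
  have hpoly : (6 + x ^ 2) * (x - x ^ 3 / 6 + x ^ 5 / 120) =
      6 * x - x ^ 5 * (14 - x ^ 2) / 120 := by ring
  have hrem : 0 < x ^ 5 * (14 - x ^ 2) := mul_pos (pow_pos hx₀ 5) (sub_pos.2 hx)
  calc (6 + x ^ 2) * sin x ≤ (6 + x ^ 2) * (x - x ^ 3 / 6 + x ^ 5 / 120) := by
        gcongr; exact sin_le_sub_cube_add_pow_five_div hx₀.le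
    _ < 6 * x := by rw [hpoly]; linarith

theorem stmt_1 (s : ℝ) (h0 : 0 < s) (h1 : s < 1/2) :
    (1/(2*s) + π^2 * s / 3) * Real.sin (2*π*s) < π := by
  set x := 2 * π * s with hx
  have hx₀ : 0 < x := by positivity
  have hx_lt_pi : x < π := by nlinarith [pi_pos]
  have hx_sq : x ^ 2 < 14 := by nlinarith [pi_lt_d2]
  have hlhs : (1/(2*s) + π^2 * s / 3) * sin x = (6 + x ^ 2) * sin x / (12 * s) := by
    rw [hx]; field_simp; ring
  have hrhs : π = 6 * x / (12 * s) := by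
    rw [hx]; field_simp; ring
  rw [hlhs, hrhs]
  exact div_lt_div_of_pos_right (six_add_sq_mul_sin_lt hx₀ hx_sq) (by positivity)
end

section
/- For every real number x with x > 2, one has 1/2 + ∑_{n=1}^∞ 2/((nx+1)(nx+2)) − π/(x·sin(2π/x)) < 0. -/
/-!
Comparing each term with `2 / ((n + 1) x)²`, the series is strictly below `2 ζ(2) / x² = π² / (3x²)`.
With `s = 2π / x ∈ (0, π)` the last term is `π / (x sin s) = s / (2 sin s)`, and the Taylor bound
`sin s ≤ s - s³/6 + s⁵/120` gives `s / sin s ≥ 1 + s²/6 = 1 + 2π² / (3x²)` as long as `s² ≤ 14`.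
-/

open Real Set

namespace Real

lemma cos_le_one_sub_sq_div_two_add_pow_four_div_s4 (x : ℝ) :
    cos x ≤ 1 - x ^ 2 / 2 + x ^ 4 / 24 := by
  wlog hx : 0 ≤ x generalizing x
  · simpa [Even.neg_pow (by decide : Even 4)] using this (-x) (by linarith)
  let f (t : ℝ) : ℝ := 1 - t ^ 2 / 2 + t ^ 4 / 24 - cos t
  have hderiv (t : ℝ) : deriv f t = sin t - (t - t ^ 3 / 6) := by
    simp (disch := fun_prop) [f]
    ring
  have hmono : MonotoneOn f (Ici 0) := by
    apply monotoneOn_of_deriv_nonneg (convex_Ici 0) (by fun_prop) (by fun_prop)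
    grind [sin_ge_sub_cube, interior_Ici]
  have h0 : f 0 ≤ f x := hmono (by simp) hx hx
  grind [cos_zero]

lemma sin_le_sub_cube_add_pow_five_div_s4 {x : ℝ} (hx : 0 ≤ x) :
    sin x ≤ x - x ^ 3 / 6 + x ^ 5 / 120 := by
  let f (t : ℝ) : ℝ := t - t ^ 3 / 6 + t ^ 5 / 120 - sin t
  have hderiv (t : ℝ) : deriv f t = 1 - t ^ 2 / 2 + t ^ 4 / 24 - cos t := by
    simp (disch := fun_prop) [f]
    ring
  have hmono : MonotoneOn f (Ici 0) := by
    apply monotoneOn_of_deriv_nonneg (convex_Ici 0) (by fun_prop) (by fun_prop)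
    grind [cos_le_one_sub_sq_div_two_add_pow_four_div_s4]
  have h0 : f 0 ≤ f x := hmono (by simp) hx hx
  grind [sin_zero]

lemma one_add_sq_div_six_le_div_sin {s : ℝ} (hs : 0 < s) (hsπ : s < π) :
    1 + s ^ 2 / 6 ≤ s / sin s := by
  have hsin : 0 < sin s := sin_pos_of_pos_of_lt_pi hs hsπ
  have hs2 : s ^ 2 ≤ 14 := by nlinarith [pi_lt_d2]
  rw [le_div_iff₀ hsin]
  calc (1 + s ^ 2 / 6) * sin s ≤ (1 + s ^ 2 / 6) * (s - s ^ 3 / 6 + s ^ 5 / 120) := by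
        gcongr
        exact sin_le_sub_cube_add_pow_five_div_s4 hs.le
    _ = s - s ^ 5 * (14 - s ^ 2) / 720 := by ring
    _ ≤ s := by
        have : 0 ≤ s ^ 5 * (14 - s ^ 2) := mul_nonneg (by positivity) (by linarith)
        linarith

end Real

lemma hasSum_two_div_sq_mul_succ_sq (x : ℝ) :
    HasSum (fun n : ℕ => 2 / (((n : ℝ) + 1) * x) ^ 2) (π ^ 2 / (3 * x ^ 2)) := by
  have hbasel : HasSum (fun n : ℕ => 1 / ((n : ℝ) + 1) ^ 2) (π ^ 2 / 6) := by
    have h := (hasSum_nat_add_iff (f := fun n : ℕ => 1 / (n : ℝ) ^ 2) 1).2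
      (by simpa using hasSum_zeta_two)
    simpa using h
  rw [show π ^ 2 / (3 * x ^ 2) = 2 / x ^ 2 * (π ^ 2 / 6) by ring]
  exact (hbasel.mul_left _).congr_fun fun n => by rw [mul_pow, mul_one_div, div_div, mul_comm]

lemma tsum_two_div_mul_add_one_mul_add_two_lt {x : ℝ} (hx : 0 < x) :
    ∑' n : ℕ, 2 / ((((n : ℝ) + 1) * x + 1) * (((n : ℝ) + 1) * x + 2)) < π ^ 2 / (3 * x ^ 2) := by
  have hbasel := hasSum_two_div_sq_mul_succ_sq x
  have hlt (n : ℕ) :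
      2 / ((((n : ℝ) + 1) * x + 1) * (((n : ℝ) + 1) * x + 2)) < 2 / (((n : ℝ) + 1) * x) ^ 2 := by
    have : 0 < ((n : ℝ) + 1) * x := by positivity
    gcongr
    nlinarith
  rw [← hbasel.tsum_eq]
  exact Summable.tsum_lt_tsum (fun n => (hlt n).le) (hlt 0)
    (hbasel.summable.of_nonneg_of_le (fun n => by positivity) fun n => (hlt n).le)
    hbasel.summable

theorem stmt_4 (x : ℝ) (hx : 2 < x) :
    1/2 + (∑' n : ℕ, 2 / ((((n : ℝ)+1)*x + 1) * (((n : ℝ)+1)*x + 2)))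
      - π/(x * Real.sin (2*π/x)) < 0 := by
  have hx0 : 0 < x := by linarith
  have hs0 : 0 < 2 * π / x := by positivity
  have hsπ : 2 * π / x < π := by
    rw [div_lt_iff₀ hx0]
    nlinarith [pi_pos]
  have hsine := one_add_sq_div_six_le_div_sin hs0 hsπ
  have hseries := tsum_two_div_mul_add_one_mul_add_two_lt hx0
  have hrhs : π / (x * sin (2 * π / x)) = 2 * π / x / sin (2 * π / x) / 2 := by
    field_simp
  have hlhs : (1 + (2 * π / x) ^ 2 / 6) / 2 = 1 / 2 + π ^ 2 / (3 * x ^ 2) := by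
    field_simp
    ring
  linarith
end

section
/- Define γ(n) = (1/(4π))·(Γ(1/n)²/Γ(2/n))·√(4·tan(π/n)/n) for natural numbers n ≥ 3, where Γ is the Gamma function. Then γ(n) tends to 1/√π as n → ∞. -/
open Real Filter Topology

/-!
Since `s Γ(s) = Γ(s + 1) → 1` as `s → 0`, we have `Γ(1/n)² / Γ(2/n) ~ n² / (n/2) = 2n`, while
`tan(π/n) ~ π/n` gives `√(4 tan(π/n) / n) ~ 2√π / n`. The product is therefore
`(1 / (4π)) · 2n · 2√π / n → 1 / √π`.
-/

theorem Real.tendsto_self_mul_Gamma_nhdsNE_zero :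
    Tendsto (fun s : ℝ => s * Gamma s) (𝓝[≠] 0) (𝓝 1) := by
  have hcont : ContinuousAt Gamma 1 :=
    (differentiableAt_Gamma fun m h => by linarith [(Nat.cast_nonneg m : (0:ℝ) ≤ m)]).continuousAt
  have hshift : Tendsto (fun s : ℝ => Gamma (s + 1)) (𝓝[≠] 0) (𝓝 1) := by
    have := hcont.tendsto.comp ((continuous_add_const (1:ℝ)).tendsto' 0 1 (zero_add 1))
    simpa [Function.comp_def, Gamma_one] using this.mono_left nhdsWithin_le_nhds
  exact hshift.congr' (eventually_nhdsWithin_of_forall fun s hs => Gamma_add_one hs)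

theorem Real.tendsto_tan_div_self_nhdsNE_zero :
    Tendsto (fun x : ℝ => tan x / x) (𝓝[≠] 0) (𝓝 1) := by
  have hderiv : HasDerivAt tan 1 0 := by simpa using hasDerivAt_tan (x := 0) (by simp)
  refine (hasDerivAt_iff_tendsto_slope.mp hderiv).congr' ?_
  filter_upwards [self_mem_nhdsWithin] with x hx
  simp [slope_def_field]

theorem tendsto_const_mul_nhdsGT_zero_nhdsNE {c : ℝ} (hc : c ≠ 0) :
    Tendsto (fun x : ℝ => c * x) (𝓝[>] 0) (𝓝[≠] 0) :=
  tendsto_nhdsWithin_iff.mpr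
    ⟨((continuous_const_mul c).tendsto' 0 0 (mul_zero c)).mono_left nhdsWithin_le_nhds,
      eventually_nhdsWithin_of_forall fun _ hx => mul_ne_zero hc (ne_of_gt hx)⟩

/-- The conformal radius of the regular `n`-gon of unit area is `polygonRadius (1 / n)`. -/
noncomputable def polygonRadius (x : ℝ) : ℝ :=
  1 / (4 * π) * (Gamma x ^ 2 / Gamma (2 * x)) * √(4 * tan (π * x) * x)

theorem polygonRadius_eq {x : ℝ} (hx : 0 < x) :
    polygonRadius x =
      1 / √π * ((x * Gamma x) ^ 2 / (2 * x * Gamma (2 * x))) * √(tan (π * x) / (π * x)) := by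
  have hsqrt : √(4 * tan (π * x) * x) = 2 * x * √π * √(tan (π * x) / (π * x)) := by
    rw [← sqrt_sq (by positivity : 0 ≤ 2 * x * √π), ← sqrt_mul (sq_nonneg _), mul_pow,
      sq_sqrt pi_pos.le]
    congr 1
    field_simp
    ring
  have hΓ : Gamma (2 * x) ≠ 0 := (Gamma_pos_of_pos (by positivity)).ne'
  have hπ : √π ≠ 0 := (sqrt_pos.mpr pi_pos).ne'
  rw [polygonRadius, hsqrt]
  field_simp
  rw [sq_sqrt pi_pos.le]
  ring

theorem tendsto_polygonRadius_nhdsGT_zero :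
    Tendsto polygonRadius (𝓝[>] 0) (𝓝 (1 / √π)) := by
  have hΓ₁ := tendsto_self_mul_Gamma_nhdsNE_zero.comp
    (tendsto_const_mul_nhdsGT_zero_nhdsNE one_ne_zero)
  have hΓ₂ := tendsto_self_mul_Gamma_nhdsNE_zero.comp
    (tendsto_const_mul_nhdsGT_zero_nhdsNE two_ne_zero)
  have htan := tendsto_tan_div_self_nhdsNE_zero.comp
    (tendsto_const_mul_nhdsGT_zero_nhdsNE pi_ne_zero)
  have hlim : Tendsto (fun x : ℝ =>
      1 / √π * ((x * Gamma x) ^ 2 / (2 * x * Gamma (2 * x))) * √(tan (π * x) / (π * x)))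
      (𝓝[>] 0) (𝓝 (1 / √π)) := by
    simpa [Function.comp_def] using
      (tendsto_const_nhds.mul ((hΓ₁.pow 2).div hΓ₂ one_ne_zero)).mul htan.sqrt
  exact hlim.congr' (eventually_nhdsWithin_of_forall fun x hx => (polygonRadius_eq hx).symm)

theorem stmt_5 :
    Tendsto (fun n : ℕ =>
        (1/(4*π)) * (Real.Gamma (1/(n:ℝ))^2 / Real.Gamma (2/(n:ℝ))) *
          Real.sqrt (4 * Real.tan (π/(n:ℝ)) / (n:ℝ)))
      atTop (nhds (1 / Real.sqrt π)) := by
  have hinv : Tendsto (fun n : ℕ => 1 / (n : ℝ)) atTop (𝓝[>] 0) :=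
    tendsto_nhdsWithin_iff.mpr ⟨tendsto_one_div_atTop_nhds_zero_nat,
      (eventually_gt_atTop 0).mono fun n hn => by simpa using hn⟩
  simpa only [Function.comp_def, polygonRadius, mul_one_div] using
    tendsto_polygonRadius_nhdsGT_zero.comp hinv
end
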